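/- Let G = (V, E, r, s) be a directed graph and f an edge-coloring of G. For each vertex v let m_f(v) denote the cardinality (as an extended natural number) of the set of colors f(E_v) incident at v. Then the coloring number of (G, f) equals the supremum of the local color counts: c(G, f) = sup_{v ∈ V} m_f(v), as an equality in the extended natural numbers ℕ∞. -/
import Mathlib


/-- Let `G = (V, E, r, s)` be a directed graph and `f` an edge-coloring
of `G` (a function `E → ℕ`).  Two edge-colorings are equivalent if they induce the same
partition into color classes of the edges incident at every vertex.  The coloring number
`c(G, f)` is the infimum, in `ℕ∞`, over all edge-colorings `g` equivalent to `f`, of the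
cardinality of the range of `g`.  Then `c(G, f) = ⨆ v, card (f '' E_v)`, where
`E_v = {e | r e = v}` and `card (f '' E_v)` is the number of colors incident at `v`. -/
theorem coloring_number_eq_sup_local_colors
    {V E : Type*} (r s : E → V) (f : E → ℕ) :
    sInf {n : ℕ∞ | ∃ g : E → ℕ,
        (∀ e e' : E, r e = r e' → (f e = f e' ↔ g e = g e')) ∧
        n = (Set.range g).encard} =
      ⨆ v : V, (f '' {e | r e = v}).encard := by
  set A : V → Set ℕ := fun v => f '' {e | r e = v} with hA
  apply le_antisymm
  · -- sInf ≤ sup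
    rcases eq_or_ne (⨆ v : V, (A v).encard) ⊤ with htop | hne
    · exact htop ▸ le_top
    · obtain ⟨N, hN⟩ := WithTop.ne_top_iff_exists.mp hne
      have hle : ∀ v, (A v).encard ≤ N := fun v => le_trans (le_iSup (fun v => (A v).encard) v) hN.ge
      have hfin : ∀ v, (A v).Finite := fun v =>
        Set.finite_of_encard_le_coe (hle v)
      have hmem : ∀ e, f e ∈ A (r e) := fun e => ⟨e, rfl, rfl⟩
      set g : E → ℕ := fun e => (A (r e) ∩ Set.Iio (f e)).ncard with hg
      have key : ∀ e e', r e = r e' → f e < f e' → g e < g e' := by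
        intro e e' hr hlt
        apply Set.ncard_lt_ncard
        · constructor
          · intro x hx
            exact ⟨hr ▸ hx.1, lt_trans hx.2 hlt⟩
          · intro hsub
            have := hsub ⟨hr ▸ hmem e, hlt⟩
            exact lt_irrefl _ (Set.mem_Iio.mp this.2)
        · exact (hfin (r e')).inter_of_left _
      have hbound : ∀ e, g e < N := by
        intro e
        have h1 : g e < (A (r e)).ncard := by
          apply Set.ncard_lt_ncard
          · constructor
            · exact Set.inter_subset_left
            · intro hsub
              exact lt_irrefl _ (Set.mem_Iio.mp (hsub (hmem e)).2)
          · exact hfin (r e)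
        have h2 : (A (r e)).ncard ≤ N := by
          have h := hle (r e)
          rw [Set.ncard_eq_toFinset_card _ (hfin (r e))]
          rwa [(hfin (r e)).encard_eq_coe_toFinset_card, Nat.cast_le] at h
        omega
      have : (Set.range g).encard ∈ {n : ℕ∞ | ∃ g : E → ℕ,
          (∀ e e' : E, r e = r e' → (f e = f e' ↔ g e = g e')) ∧
          n = (Set.range g).encard} := by
        refine ⟨g, fun e e' hr => ⟨fun hf => ?_, fun hgee => ?_⟩, rfl⟩
        · simp only [hg, hr, hf]
        · rcases lt_trichotomy (f e) (f e') with h | h | h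
          · exact absurd hgee (key e e' hr h).ne
          · exact h
          · exact absurd hgee.symm (key e' e hr.symm h).ne
      calc sInf _ ≤ (Set.range g).encard := sInf_le this
        _ ≤ (Set.Iio N : Set ℕ).encard := by
            apply Set.encard_mono
            rintro _ ⟨e, rfl⟩
            exact hbound e
        _ = N := by
            rw [← Finset.coe_range, Set.encard_coe_eq_coe_finsetCard, Finset.card_range]
        _ = _ := hN
  · -- sup ≤ sInf
    apply le_sInf
    rintro n ⟨g, hgequiv, rfl⟩
    apply iSup_le
    intro v
    classical
    set φ : ℕ → ℕ := fun c =>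
      if h : ∃ e, r e = v ∧ f e = c then g h.choose else 0 with hφ
    have hφ_inj : Set.InjOn φ (A v) := by
      rintro c ⟨e, he, rfl⟩ c' ⟨e', he', rfl⟩ hcc
      have h1 : ∃ a, r a = v ∧ f a = f e := ⟨e, he, rfl⟩
      have h2 : ∃ a, r a = v ∧ f a = f e' := ⟨e', he', rfl⟩
      rw [hφ] at hcc
      simp only [dif_pos h1, dif_pos h2] at hcc
      obtain ⟨hr1, hf1⟩ := h1.choose_spec
      obtain ⟨hr2, hf2⟩ := h2.choose_spec
      have : f h1.choose = f h2.choose := by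
        rw [hgequiv _ _ (hr1.trans hr2.symm)]
        exact hcc
      rw [hf1, hf2] at this
      exact this
    calc (A v).encard = (φ '' A v).encard := (hφ_inj.encard_image).symm
      _ ≤ (Set.range g).encard := by
          apply Set.encard_mono
          rintro _ ⟨c, hc, rfl⟩
          obtain ⟨e, he, rfl⟩ := hc
          have h1 : ∃ a, r a = v ∧ f a = f e := ⟨e, he, rfl⟩
          rw [hφ]
          simp only [dif_pos h1]
          exact ⟨h1.choose, rfl⟩
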